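/- Suppose in addition that P is a star chain with hub 0, i.e., P(i,j) = 0 whenever i ≠ j, i ≠ 0 and j ≠ 0; thus P₀ = diag(η₁,…,η_n) with η_j = P(j,j). Then for each i = 1,…,r, P*(0,i) = Σ_{j ∈ m(i)} P(0,j), where m(i) := { j ∈ {1,…,n} : P(j,j) = γ_i }. -/

import Mathlib

/-!
Expanding `det (x - P)` along the hub (a Schur complement over the diagonal leaf block) gives,
for `x` off the leaf values `η_j = P(j,j)`,
`charpoly P (x) / charpoly P₀ (x) = x - P(0,0) - Σ_j P(0,j) P(j,0) / (x - η_j)`.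
After cancelling `c`, the left side is `∏_{l=0}^r (x - λ_l) / ∏_{k=1}^r (x - γ_k)`, with residue
`∏_l (γ_i - λ_l) / ∏_{k ≠ i} (γ_i - γ_k)` at the simple pole `γ_i`. On the right the residue is
`-Σ_{j ∈ m(i)} P(0,j) P(j,0) = -(1 - γ_i) Σ_{j ∈ m(i)} P(0,j)`, because a leaf returns to the hub
with probability `1 - η_j`. As `λ_0 = 1`, this gives
`Σ_{j ∈ m(i)} P(0,j) = ∏_{l ≥ 1} (γ_i - λ_l) / ∏_{k ≠ i} (γ_i - γ_k)`, and unwinding `ρ` and `π*`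
gives the same expression for `P*(0,i)`.
-/

open Matrix Polynomial

/-- `ρ_i = (1−γ_i)/(1−λ_i)`. -/
noncomputable def rho (γ lam : ℕ → ℝ) (i : ℕ) : ℝ := (1 - γ i) / (1 - lam i)

/-- The row vector `π*_k ∈ ℝ^{r+1}`. -/
noncomputable def pistar (γ lam : ℕ → ℝ) (k i : ℕ) : ℝ :=
  if i = 0 then ∏ j ∈ Finset.Icc 1 k, rho γ lam j
  else if i ≤ k then
    (1 - rho γ lam i) *
      ∏ j ∈ (Finset.Icc 1 k).erase i, ((1 - γ j - rho γ lam j * (1 - γ i)) / (γ i - γ j))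
  else 0

/-- The star-chain transition matrix `P*`. -/
noncomputable def Pstar (r : ℕ) (γ lam : ℕ → ℝ) : Matrix (Fin (r + 1)) (Fin (r + 1)) ℝ :=
  Matrix.of fun i j =>
    if i.val = 0 then
      (if j.val = 0 then
        1 - (∑ l ∈ Finset.Icc 1 r, (1 - γ l) * pistar γ lam r l) / pistar γ lam r 0
      else (1 - γ j.val) * pistar γ lam r j.val / pistar γ lam r 0)
    else if j = i then γ i.val
    else if j.val = 0 then 1 - γ i.val
    else 0

open Filter Topology

theorem Finset.prod_range_succ_eq_mul_prod_Icc {M : Type*} [CommMonoid M] (f : ℕ → M) (r : ℕ) :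
    ∏ l ∈ Finset.range (r + 1), f l = f 0 * ∏ l ∈ Finset.Icc 1 r, f l := by
  rw [Finset.range_eq_Ico, Finset.prod_eq_prod_Ico_succ_bot (by omega : 0 < r + 1), zero_add,
    Finset.Ico_add_one_right_eq_Icc]

theorem Fin.sum_filter_ne_zero_and {M : Type*} [AddCommMonoid M] {n : ℕ} (f : Fin (n + 1) → M)
    (p : Fin (n + 1) → Prop) [DecidablePred p] :
    ∑ j ∈ Finset.univ.filter (fun j => j ≠ 0 ∧ p j), f j = ∑ j : Fin n with p j.succ, f j.succ := by
  simp [Finset.sum_filter, Fin.sum_univ_succ]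

theorem Matrix.eval_charpoly_of_star {K : Type*} [Field K] {n : ℕ}
    (M : Matrix (Fin (n + 1)) (Fin (n + 1)) K)
    (hM : ∀ i j : Fin n, i ≠ j → M i.succ j.succ = 0) {x : K}
    (hx : ∀ j : Fin n, x ≠ M j.succ j.succ) :
    M.charpoly.eval x = (∏ j : Fin n, (x - M j.succ j.succ)) *
      (x - M 0 0 - ∑ j : Fin n, M 0 j.succ * M j.succ 0 / (x - M j.succ j.succ)) := by
  set d : Fin n → K := fun j => x - M j.succ j.succ
  have hd : ∀ j, d j ≠ 0 := fun j => sub_ne_zero.mpr (hx j)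
  let e : Fin n ⊕ Unit ≃ Fin (n + 1) :=
    ((finSuccEquiv n).trans (Equiv.optionEquivSumPUnit (Fin n))).symm
  have hblocks : (scalar _ x - M).submatrix e e = fromBlocks (diagonal d)
      (of fun j _ => -M j.succ 0) (of fun _ j => -M 0 j.succ) (of fun _ _ => x - M 0 0) := by
    ext (i | i) (j | j)
    · obtain rfl | hij := eq_or_ne i j
      · simp [e, d]
      · simp [e, hij, hM i j hij]
    all_goals simp [e, (Fin.succ_ne_zero _).symm]
  let : Invertible d := ⟨fun j => (d j)⁻¹, by ext j; simp [hd], by ext j; simp [hd]⟩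
  let := diagonalInvertible d
  rw [eval_charpoly, ← det_submatrix_equiv_self e, hblocks, det_fromBlocks₁₁, invOf_diagonal_eq,
    det_diagonal, det_unique]
  have hinv : ⅟d = fun j => (d j)⁻¹ := rfl
  simp [mul_apply, diagonal_apply, hinv, d, div_eq_mul_inv, mul_right_comm]

theorem Matrix.submatrix_succ_eq_diagonal_of_star {α : Type*} [Zero α] {n : ℕ}
    (M : Matrix (Fin (n + 1)) (Fin (n + 1)) α)
    (hM : ∀ i j : Fin n, i ≠ j → M i.succ j.succ = 0) :
    M.submatrix Fin.succ Fin.succ = diagonal fun j => M j.succ j.succ := by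
  ext i j
  obtain rfl | hij := eq_or_ne i j
  · simp
  · simp [hij, hM i j hij]

section Residue

variable {𝕜 : Type*} [NontriviallyNormedField 𝕜] [DecidableEq 𝕜]

theorem tendsto_sub_mul_sum_div {ι : Type*} (s : Finset ι) (a η : ι → 𝕜) (g : 𝕜) :
    Tendsto (fun x => (x - g) * ∑ j ∈ s, a j / (x - η j)) (𝓝[≠] g)
      (𝓝 (∑ j ∈ s with η j = g, a j)) := by
  simp_rw [Finset.mul_sum, Finset.sum_filter]
  refine tendsto_finsetSum _ fun j _ => ?_
  split_ifs with hj
  · subst hj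
    refine tendsto_const_nhds.congr' ?_
    filter_upwards [self_mem_nhdsWithin] with x hx
    field_simp [sub_ne_zero.mpr hx]
  · have hcont : ContinuousAt (fun x => (x - g) * (a j / (x - η j))) g :=
      (continuousAt_id.sub continuousAt_const).mul
        (continuousAt_const.div (continuousAt_id.sub continuousAt_const)
          (sub_ne_zero.mpr (Ne.symm hj)))
    simpa using hcont.tendsto.mono_left nhdsWithin_le_nhds

theorem Matrix.eval_eq_neg_sum_mul_of_star {n : ℕ} (M : Matrix (Fin (n + 1)) (Fin (n + 1)) 𝕜)
    (hM : ∀ i j : Fin n, i ≠ j → M i.succ j.succ = 0) {c L G : 𝕜[X]} {g : 𝕜}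
    (hL : M.charpoly = c * L)
    (hG : (M.submatrix Fin.succ Fin.succ).charpoly = c * ((X - C g) * G)) :
    L.eval g = -(∑ j : Fin n with M j.succ j.succ = g, M 0 j.succ * M j.succ 0) * G.eval g := by
  set η : Fin n → 𝕜 := fun j => M j.succ j.succ
  have hG' : ∀ x, c.eval x * ((x - g) * G.eval x) = ∏ j, (x - η j) := fun x => by
    simpa [submatrix_succ_eq_diagonal_of_star M hM, charpoly_diagonal, eval_prod] using
      (congrArg (eval x) hG).symm
  have hoff : ∀ᶠ x in 𝓝[≠] g, ∀ j, x ≠ η j :=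
    eventually_all.2 fun j => nhdsNE_le_cofinite g (Set.finite_singleton (η j)).compl_mem_cofinite
  have hLeq : (fun x => L.eval x) =ᶠ[𝓝[≠] g] fun x => G.eval x * ((x - g) * (x - M 0 0) -
      (x - g) * ∑ j, M 0 j.succ * M j.succ 0 / (x - η j)) := by
    filter_upwards [hoff] with x hx
    have hc : c.eval x ≠ 0 := by
      refine left_ne_zero_of_mul (b := (x - g) * G.eval x) ?_
      rw [hG']
      exact Finset.prod_ne_zero_iff.mpr fun j _ => sub_ne_zero.mpr (hx j)
    apply mul_left_cancel₀ hc
    have hdet := eval_charpoly_of_star M hM hx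
    rw [hL, eval_mul, ← hG'] at hdet
    rw [hdet]
    ring
  have hlim : Tendsto (fun x => G.eval x * ((x - g) * (x - M 0 0) -
      (x - g) * ∑ j, M 0 j.succ * M j.succ 0 / (x - η j))) (𝓝[≠] g)
      (𝓝 (G.eval g * ((g - g) * (g - M 0 0) - ∑ j with η j = g, M 0 j.succ * M j.succ 0))) := by
    refine (G.continuousAt.tendsto.mono_left nhdsWithin_le_nhds).mul (Tendsto.sub ?_
      (tendsto_sub_mul_sum_div _ _ η g))
    exact ((continuous_id.sub continuous_const).mul
      (continuous_id.sub continuous_const)).continuousAt.tendsto.mono_left nhdsWithin_le_nhds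
  rw [tendsto_nhds_unique
    ((L.continuousAt.tendsto.mono_left nhdsWithin_le_nhds).congr' hLeq) hlim]
  ring

end Residue

theorem Matrix.apply_succ_zero_of_star {R : Type*} [AddCommGroup R] {n : ℕ}
    (M : Matrix (Fin (n + 1)) (Fin (n + 1)) R)
    (hM : ∀ i j : Fin n, i ≠ j → M i.succ j.succ = 0) (a : R) (hrow : ∀ i, ∑ j, M i j = a)
    (j : Fin n) : M j.succ 0 = a - M j.succ j.succ := by
  have := hrow j.succ
  rw [Fin.sum_univ_succ, Finset.sum_eq_single j (fun k _ hk => hM j k hk.symm) (by simp)] at this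
  rw [← this, add_sub_cancel_right]

theorem Matrix.sum_filter_mul_apply_succ_zero_of_star {R : Type*} [CommRing R] [DecidableEq R]
    {n : ℕ} (M : Matrix (Fin (n + 1)) (Fin (n + 1)) R)
    (hM : ∀ i j : Fin n, i ≠ j → M i.succ j.succ = 0) (a : R) (hrow : ∀ i, ∑ j, M i j = a)
    (g : R) :
    ∑ j : Fin n with M j.succ j.succ = g, M 0 j.succ * M j.succ 0
      = (a - g) * ∑ j : Fin n with M j.succ j.succ = g, M 0 j.succ := by
  rw [Finset.mul_sum]
  refine Finset.sum_congr rfl fun j hj => ?_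
  rw [M.apply_succ_zero_of_star hM a hrow, (Finset.mem_filter.mp hj).2, mul_comm]

def Interlaces {α : Type*} [LT α] (r : ℕ) (γ lam : ℕ → α) : Prop :=
  ∀ i : ℕ, 1 ≤ i → i ≤ r → lam (i - 1) > γ i ∧ γ i > lam i

namespace Interlaces

variable {α : Type*} [LinearOrder α] {r : ℕ} {γ lam : ℕ → α}

theorem strictAntiOn_lam (h : Interlaces r γ lam) : StrictAntiOn lam (Set.Icc 0 r) :=
  strictAntiOn_of_add_one_lt Set.ordConnected_Icc fun a _ _ ha => by
    have := h (a + 1) (by omega) ha.2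
    rw [Nat.add_sub_cancel] at this
    exact this.2.trans this.1

theorem lam_lt_lam (h : Interlaces r γ lam) {k l : ℕ} (hlk : l < k) (hk : k ≤ r) :
    lam k < lam l :=
  h.strictAntiOn_lam ⟨by omega, by omega⟩ ⟨by omega, hk⟩ hlk

theorem gamma_lt_lam (h : Interlaces r γ lam) {k l : ℕ} (hlk : l < k) (hk : k ≤ r) :
    γ k < lam l :=
  (h k (by omega) hk).1.trans_le <| by
    rcases (show l = k - 1 ∨ l < k - 1 by omega) with rfl | hl
    exacts [le_rfl, (h.lam_lt_lam hl (by omega)).le]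

theorem lam_lt_lam_zero (h : Interlaces r γ lam) {k : ℕ} (hk : k ∈ Finset.Icc 1 r) :
    lam k < lam 0 :=
  h.lam_lt_lam (Finset.mem_Icc.mp hk).1 (Finset.mem_Icc.mp hk).2

theorem gamma_lt_lam_zero (h : Interlaces r γ lam) {k : ℕ} (hk : k ∈ Finset.Icc 1 r) :
    γ k < lam 0 :=
  h.gamma_lt_lam (Finset.mem_Icc.mp hk).1 (Finset.mem_Icc.mp hk).2

theorem strictAntiOn_gamma (h : Interlaces r γ lam) : StrictAntiOn γ (Set.Icc 1 r) :=
  fun j hj _ hk hjk => (h.gamma_lt_lam hjk hk.2).trans (h j hj.1 hj.2).2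

theorem prod_erase_sub_ne_zero {β : Type*} [CommRing β] [IsDomain β] [LinearOrder β]
    {γ lam : ℕ → β} (h : Interlaces r γ lam) {i : ℕ} (hi : i ∈ Finset.Icc 1 r) :
    ∏ k ∈ (Finset.Icc 1 r).erase i, (γ i - γ k) ≠ 0 :=
  Finset.prod_ne_zero_iff.mpr fun k hk => sub_ne_zero.mpr <|
    h.strictAntiOn_gamma.injOn.ne (by simpa using hi)
      (by simpa using Finset.mem_of_mem_erase hk) (Finset.ne_of_mem_erase hk).symm

end Interlaces

theorem Pstar_zero_apply {r : ℕ} {γ lam : ℕ → ℝ} {i : Fin (r + 1)} (hi : i ≠ 0)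
    (hγ : ∀ k ∈ Finset.Icc 1 r, γ k ≠ 1) (hlam : ∀ k ∈ Finset.Icc 1 r, lam k ≠ 1) :
    Pstar r γ lam 0 i
      = (∏ l ∈ Finset.Icc 1 r, (γ i - lam l)) / ∏ k ∈ (Finset.Icc 1 r).erase i, (γ i - γ k) := by
  have hi0 : (i : ℕ) ≠ 0 := Fin.val_ne_zero_iff.mpr hi
  have hiI : (i : ℕ) ∈ Finset.Icc 1 r := Finset.mem_Icc.mpr ⟨by omega, by omega⟩
  have h1γ : ∀ k ∈ Finset.Icc 1 r, 1 - γ k ≠ 0 := fun k hk => sub_ne_zero.mpr (hγ k hk).symm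
  have h1lam : ∀ k ∈ Finset.Icc 1 r, 1 - lam k ≠ 0 := fun k hk => sub_ne_zero.mpr (hlam k hk).symm
  have hleaf : ∀ k ∈ (Finset.Icc 1 r).erase i,
      (1 - γ k - rho γ lam k * (1 - γ i)) / (γ i - γ k) / rho γ lam k
        = (γ i - lam k) / (γ i - γ k) := fun k hk => by
    have hkI := Finset.mem_of_mem_erase hk
    rw [div_right_comm, rho]
    congr 1
    field_simp [h1γ k hkI, h1lam k hkI]
    ring
  have hhub : (1 - γ i) * (1 - rho γ lam i) / rho γ lam i = γ i - lam i := by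
    rw [rho]
    field_simp [h1γ i hiI, h1lam i hiI]
    ring
  have hPstar : Pstar r γ lam 0 i = (1 - γ i) * pistar γ lam r i / pistar γ lam r 0 := by
    simp [Pstar, hi]
  rw [hPstar, pistar, pistar, if_pos rfl, if_neg hi0,
    if_pos (by omega), ← Finset.mul_prod_erase _ _ hiI, ← Finset.mul_prod_erase _ _ hiI]
  calc (1 - γ i) * ((1 - rho γ lam i) * ∏ k ∈ (Finset.Icc 1 r).erase i,
          ((1 - γ k - rho γ lam k * (1 - γ i)) / (γ i - γ k)))
        / (rho γ lam i * ∏ k ∈ (Finset.Icc 1 r).erase i, rho γ lam k)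
      = (1 - γ i) * (1 - rho γ lam i) / rho γ lam i * ∏ k ∈ (Finset.Icc 1 r).erase i,
          ((1 - γ k - rho γ lam k * (1 - γ i)) / (γ i - γ k) / rho γ lam k) := by
        rw [Finset.prod_div_distrib (g := rho γ lam)]
        ring
    _ = _ := by
        rw [hhub, Finset.prod_congr rfl hleaf, Finset.prod_div_distrib]
        ring

theorem stmt19_general {n : ℕ}
    (P : Matrix (Fin (n + 1)) (Fin (n + 1)) ℝ)
    (hP_row : ∀ i, ∑ j, P i j = 1)
    (hstar : ∀ i j : Fin (n + 1), i ≠ j → i ≠ 0 → j ≠ 0 → P i j = 0)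
    (r : ℕ) (γ lam : ℕ → ℝ)
    (hlam0 : lam 0 = 1)
    (hinter : ∀ i : ℕ, 1 ≤ i → i ≤ r → lam (i - 1) > γ i ∧ γ i > lam i)
    (c : Polynomial ℝ)
    (hcharP : P.charpoly = c * ∏ i ∈ Finset.range (r + 1), (X - C (lam i)))
    (hcharP0 : (P.submatrix Fin.succ Fin.succ).charpoly
        = c * ∏ i ∈ Finset.Icc 1 r, (X - C (γ i))) :
    ∀ i : Fin (r + 1), i ≠ 0 →
      Pstar r γ lam 0 i
        = ∑ j ∈ Finset.univ.filter (fun j : Fin (n + 1) => j ≠ 0 ∧ P j j = γ i.val),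
            P 0 j := by
  intro i hi
  have hI : Interlaces r γ lam := hinter
  have hiI : (i : ℕ) ∈ Finset.Icc 1 r :=
    Finset.mem_Icc.mpr ⟨Nat.one_le_iff_ne_zero.mpr (Fin.val_ne_zero_iff.mpr hi), by omega⟩
  have hleaves : ∀ a b : Fin n, a ≠ b → P a.succ b.succ = 0 := fun a b hab =>
    hstar _ _ (Fin.succ_injective _ |>.ne hab) a.succ_ne_zero b.succ_ne_zero
  have hres := P.eval_eq_neg_sum_mul_of_star hleaves hcharP
    (hcharP0.trans (by rw [← Finset.mul_prod_erase _ _ hiI]))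
  rw [P.sum_filter_mul_apply_succ_zero_of_star hleaves 1 hP_row, eval_prod, eval_prod,
    Finset.prod_range_succ_eq_mul_prod_Icc] at hres
  simp only [eval_sub, eval_X, eval_C, hlam0] at hres
  have hγ1 : ∀ k ∈ Finset.Icc 1 r, γ k ≠ 1 := fun k hk => (hlam0 ▸ hI.gamma_lt_lam_zero hk).ne
  rw [Pstar_zero_apply hi hγ1 fun k hk => (hlam0 ▸ hI.lam_lt_lam_zero hk).ne,
    Fin.sum_filter_ne_zero_and, div_eq_iff (hI.prod_erase_sub_ne_zero hiI)]
  refine mul_left_cancel₀ (sub_ne_zero.mpr (hγ1 i hiI)) ?_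
  linear_combination hres

/-- if the given chain `P` is itself a star chain with hub `0` (so that
`P₀` is diagonal with entries `η_j = P(j,j)`), then for each `i = 1,…,r`,
`P*(0,i) = Σ_{j ∈ m(i)} P(0,j)` where `m(i) = {j ∈ {1,…,n} : P(j,j) = γ_i}`: the star
chain `P*` is obtained by collapsing all leaves with the same one-step transition
probability to `0` into a single leaf. -/
theorem stmt19 {n : ℕ} (hn : 1 ≤ n)
    (P : Matrix (Fin (n + 1)) (Fin (n + 1)) ℝ)
    (hP_nonneg : ∀ i j, 0 ≤ P i j) (hP_row : ∀ i, ∑ j, P i j = 1)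
    (hprim : ∃ t : ℕ, ∀ i j, 0 < (P ^ t) i j)
    (π : Fin (n + 1) → ℝ) (hπ_pos : ∀ i, 0 < π i) (hπ_sum : ∑ i, π i = 1)
    (hπ_stat : π ᵥ* P = π)
    (hstar : ∀ i j : Fin (n + 1), i ≠ j → i ≠ 0 → j ≠ 0 → P i j = 0)
    (r : ℕ) (hr : 1 ≤ r) (γ lam : ℕ → ℝ)
    (hlam0 : lam 0 = 1)
    (hinter : ∀ i : ℕ, 1 ≤ i → i ≤ r → lam (i - 1) > γ i ∧ γ i > lam i)
    (hlamr : 0 ≤ lam r)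
    (c : Polynomial ℝ) (hc : c.Monic)
    (hcharP : P.charpoly = c * ∏ i ∈ Finset.range (r + 1), (X - C (lam i)))
    (hcharP0 : (P.submatrix Fin.succ Fin.succ).charpoly
        = c * ∏ i ∈ Finset.Icc 1 r, (X - C (γ i))) :
    ∀ i : Fin (r + 1), i ≠ 0 →
      Pstar r γ lam 0 i
        = ∑ j ∈ Finset.univ.filter (fun j : Fin (n + 1) => j ≠ 0 ∧ P j j = γ i.val),
            P 0 j :=
  stmt19_general P hP_row hstar r γ lam hlam0 hinter c hcharP hcharP0
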